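/- arXiv:1702.02870 — 6 statements merged into one kernel-verified Lean document; each statement's English description precedes it below -/
import Mathlib

section
/- If (X,T) is expansive with expansivity constant δ and has non-uniform specification at scale δ with gap bounds f(n), then for every η < δ there exists a constant C = C(η) such that (X,T) has non-uniform specification at scale η with gap bounds f(n + C) + C. -/
open Filter Topology MeasureTheory

/-- `z` `η`-shadows the points `x 0, …, x (k-1)` for `n i` iterates with gaps `m i`. -/
def Shadows {X : Type*} [MetricSpace X] (T : X → X) (η : ℝ) (k : ℕ)
    (x : ℕ → X) (n m : ℕ → ℕ) (z : X) : Prop :=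
  ∀ i < k, ∀ l < n i,
    dist (T^[l + ∑ j ∈ Finset.range i, (n j + m j)] z) (T^[l] (x i)) < η

/-- Non-uniform specification with gap bounds `f` at scale `η`. -/
def NonUnifSpec {X : Type*} [MetricSpace X] (T : X → X) (f : ℕ → ℕ) (η : ℝ) : Prop :=
  ∀ (k : ℕ) (x : ℕ → X) (n m : ℕ → ℕ),
    (∀ i, i + 1 < k → max (f (n i)) (f (n (i + 1))) ≤ m i) →
    ∃ z, Shadows T η k x n m z

/-- Expansivity with constant `δ`: some `ℤ`-iterate separates any two distinct points by more than `δ`. -/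
def Expansive {X : Type*} [MetricSpace X] [CompactSpace X] (T : X ≃ₜ X) (δ : ℝ) : Prop :=
  ∀ x y : X, x ≠ y → ∃ n : ℤ,
    δ < dist (((T.toEquiv : Equiv.Perm X) ^ n) x) (((T.toEquiv : Equiv.Perm X) ^ n) y)

private lemma cont_zpow {X : Type*} [MetricSpace X] (T : X ≃ₜ X) (j : ℤ) :
    Continuous fun x : X => ((T.toEquiv : Equiv.Perm X) ^ j) x := by
  rcases j with k | k
  · show Continuous fun x => ((T.toEquiv : Equiv.Perm X) ^ (k : ℤ)) x
    simp only [zpow_natCast, Equiv.Perm.coe_pow]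
    exact T.continuous.iterate k
  · show Continuous fun x => ((T.toEquiv : Equiv.Perm X) ^ (Int.negSucc k)) x
    have h : (T.toEquiv : Equiv.Perm X) ^ (Int.negSucc k)
        = (T.symm.toEquiv : Equiv.Perm X) ^ (k + 1) := by
      rw [zpow_negSucc, ← inv_pow]; rfl
    rw [h]
    simp only [Equiv.Perm.coe_pow]
    exact T.symm.continuous.iterate (k + 1)

private lemma unif_exp {X : Type*} [MetricSpace X] [CompactSpace X]
    (T : X ≃ₜ X) (δ : ℝ) (hexp : Expansive T δ) (η : ℝ) (hη : 0 < η) :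
    ∃ N : ℕ, ∀ x y : X,
      (∀ j : ℤ, |j| ≤ (N : ℤ) →
        dist (((T.toEquiv : Equiv.Perm X) ^ j) x) (((T.toEquiv : Equiv.Perm X) ^ j) y) ≤ δ) →
      dist x y < η := by
  set K : Set (X × X) := {p | η ≤ dist p.1 p.2} with hK
  have hKc : IsCompact K := by
    apply IsClosed.isCompact
    exact isClosed_le continuous_const (continuous_dist.comp (continuous_fst.prodMk continuous_snd))
  set U : ℤ → Set (X × X) := fun j =>
    {p | δ < dist (((T.toEquiv : Equiv.Perm X) ^ j) p.1) (((T.toEquiv : Equiv.Perm X) ^ j) p.2)}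
    with hU
  have hUopen : ∀ j, IsOpen (U j) := by
    intro j
    apply isOpen_lt continuous_const
    exact continuous_dist.comp (((cont_zpow T j).comp continuous_fst).prodMk
      ((cont_zpow T j).comp continuous_snd))
  have hcover : K ⊆ ⋃ j, U j := by
    intro p hp
    have hne : p.1 ≠ p.2 := by
      intro h
      rw [hK] at hp
      simp only [Set.mem_setOf_eq, h, dist_self] at hp
      linarith
    obtain ⟨j, hj⟩ := hexp p.1 p.2 hne
    exact Set.mem_iUnion.2 ⟨j, hj⟩
  obtain ⟨t, ht⟩ := hKc.elim_finite_subcover U hUopen hcover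
  refine ⟨t.sup Int.natAbs, fun x y h => ?_⟩
  by_contra hc
  push_neg at hc
  have hmem : (x, y) ∈ K := hc
  obtain ⟨j, hjt, hjU⟩ := Set.mem_iUnion₂.1 (ht hmem)
  have hjb : |j| ≤ ((t.sup Int.natAbs : ℕ) : ℤ) := by
    have h2 := Finset.le_sup (f := Int.natAbs) hjt
    rw [Int.abs_eq_natAbs]
    exact_mod_cast h2
  exact absurd (h j hjb) (not_le.2 hjU)

private lemma zpow_nat_apply {X : Type*} [MetricSpace X] (T : X ≃ₜ X) (k : ℕ) (x : X) :
    ((T.toEquiv : Equiv.Perm X) ^ (k : ℤ)) x = (⇑T)^[k] x := by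
  rw [zpow_natCast]
  simp [Equiv.Perm.coe_pow]

private lemma unif_exp' {X : Type*} [MetricSpace X] [CompactSpace X]
    (T : X ≃ₜ X) (δ : ℝ) (hexp : Expansive T δ) (η : ℝ) (hη : 0 < η) :
    ∃ N : ℕ, ∀ x y : X,
      (∀ s ≤ 2 * N, dist ((⇑T)^[s] x) ((⇑T)^[s] y) ≤ δ) →
      dist ((⇑T)^[N] x) ((⇑T)^[N] y) < η := by
  obtain ⟨N, hN⟩ := unif_exp T δ hexp η hη
  refine ⟨N, fun x y h => ?_⟩
  apply hN
  intro j hj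
  have hj' : -(N : ℤ) ≤ j := by
    rw [abs_le] at hj; exact hj.1
  have hne : (0 : ℤ) ≤ j + N := by omega
  have key : ∀ w : X, ((T.toEquiv : Equiv.Perm X) ^ j) ((⇑T)^[N] w)
      = (⇑T)^[(j + N).toNat] w := by
    intro w
    have h1 : ((T.toEquiv : Equiv.Perm X) ^ j) ((⇑T)^[N] w)
        = ((T.toEquiv : Equiv.Perm X) ^ (j + (N : ℤ))) w := by
      rw [zpow_add, Equiv.Perm.mul_apply, zpow_nat_apply]
    rw [h1, ← zpow_nat_apply T (j + N).toNat w, Int.toNat_of_nonneg hne]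
  rw [key x, key y]
  apply h
  rw [abs_le] at hj
  omega

/-- Non-uniform specification at the expansivity scale `δ` with gap bounds `f n` passes to any
smaller scale `η < δ` with gap bounds `f (n + C) + C` for some constant `C = C(η)`. -/
theorem nonUnifSpec_scale_change {X : Type*} [MetricSpace X] [CompactSpace X]
    (T : X ≃ₜ X) (δ : ℝ) (hδ : 0 < δ) (hexp : Expansive T δ)
    (f : ℕ → ℕ) (hfmono : Monotone f) (hspec : NonUnifSpec (⇑T) f δ)
    (η : ℝ) (hη : 0 < η) (hηδ : η < δ) :
    ∃ C : ℕ, NonUnifSpec (⇑T) (fun n => f (n + C) + C) η := by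
  obtain ⟨N, hN⟩ := unif_exp' T δ hexp η hη
  refine ⟨2 * N, ?_⟩
  intro k x n m hm
  set x' : ℕ → X := fun i => (⇑T.symm)^[N] (x i) with hx'
  set n' : ℕ → ℕ := fun i => n i + 2 * N with hn'
  set m' : ℕ → ℕ := fun i => m i - 2 * N with hm'
  have hgap : ∀ i, i + 1 < k → max (f (n' i)) (f (n' (i + 1))) ≤ m' i := by
    intro i hi
    have h := hm i hi
    have h1 : f (n i + 2 * N) + 2 * N ≤ m i := le_trans (le_max_left _ _) h
    have h2 : f (n (i + 1) + 2 * N) + 2 * N ≤ m i := le_trans (le_max_right _ _) h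
    simp only [hn', hm', max_le_iff]
    omega
  obtain ⟨z', hz'⟩ := hspec k x' n' m' hgap
  refine ⟨(⇑T)^[N] z', ?_⟩
  intro i hi l hl
  have hmge : ∀ j, j < i → 2 * N ≤ m j := by
    intro j hj
    have h := hm j (by omega)
    have h1 : f (n j + 2 * N) + 2 * N ≤ m j := le_trans (le_max_left _ _) h
    omega
  have hsum : ∑ j ∈ Finset.range i, (n' j + m' j) = ∑ j ∈ Finset.range i, (n j + m j) := by
    apply Finset.sum_congr rfl
    intro j hj
    have := hmge j (Finset.mem_range.1 hj)
    simp only [hn', hm']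
    omega
  set S := ∑ j ∈ Finset.range i, (n j + m j) with hS
  -- apply uniform expansivity to the shifted points
  have key := hN ((⇑T)^[l + S] z') ((⇑T)^[l] (x' i)) ?_
  · -- rewrite key into the goal
    have e1 : (⇑T)^[N] ((⇑T)^[l + S] z') = (⇑T)^[l + S] ((⇑T)^[N] z') := by
      rw [← Function.iterate_add_apply, ← Function.iterate_add_apply, Nat.add_comm]
    have e2 : (⇑T)^[N] ((⇑T)^[l] (x' i)) = (⇑T)^[l] (x i) := by
      rw [← Function.iterate_add_apply, Nat.add_comm, Function.iterate_add_apply]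
      congr 1
      exact Function.LeftInverse.iterate T.apply_symm_apply N (x i)
    rw [e1, e2] at key
    exact key
  · intro s hs
    have h1 : (⇑T)^[s] ((⇑T)^[l + S] z') = (⇑T)^[(s + l) + S] z' := by
      rw [← Function.iterate_add_apply]
      ring_nf
    have h2 : (⇑T)^[s] ((⇑T)^[l] (x' i)) = (⇑T)^[s + l] (x' i) := by
      rw [← Function.iterate_add_apply]
    rw [h1, h2]
    have hlt : s + l < n' i := by simp only [hn']; omega
    have := hz' i hi (s + l) hlt
    rw [hsum] at this
    exact this.le
end

section
/- If (X,T) is expansive with expansivity constant δ, has non-uniform specification with gap bounds f(n) at scale δ/3, and φ is a potential with partial sum variation bounds g(n) at scale δ/3, then for all n: Z(X,T,φ,n,δ) ≤ exp((n+f(n))·P(X,T,φ) − f(n)·inf φ + g(n)). -/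
open Filter Topology MeasureTheory

/-- Birkhoff partial sums `S_n φ`. -/
def birkhoff {X : Type*} (T : X → X) (φ : X → ℝ) (n : ℕ) (x : X) : ℝ :=
  ∑ i ∈ Finset.range n, φ (T^[i] x)

/-- `g` is a bound for the partial sum variations of `φ` at scale `η`:
`g n ≥ V(X,T,φ,i,η)` whenever `i ≤ n`. -/
def HasVarBounds {X : Type*} [MetricSpace X] (T : X → X) (φ : X → ℝ) (g : ℕ → ℝ) (η : ℝ) : Prop :=
  ∀ n, ∀ i ≤ n, ∀ x y : X, (∀ j < i, dist (T^[j] x) (T^[j] y) < η) →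
    |birkhoff T φ i x - birkhoff T φ i y| ≤ g n

/-- `S` is `(n, ε)`-separated. -/
def IsSep {X : Type*} [MetricSpace X] (T : X → X) (n : ℕ) (ε : ℝ) (S : Set X) : Prop :=
  ∀ x ∈ S, ∀ y ∈ S, x ≠ y → ∃ k < n, ε < dist (T^[k] x) (T^[k] y)

/-- The partition function `Z(X,T,φ,n,ε)`: the maximal value of `∑_{x ∈ S} e^{S_n φ(x)}`
over `(n,ε)`-separated sets `S`. -/
noncomputable def partFn {X : Type*} [MetricSpace X] (T : X → X) (φ : X → ℝ) (n : ℕ) (ε : ℝ) : ℝ :=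
  sSup {r | ∃ S : Finset X, IsSep T n ε ↑S ∧ r = ∑ x ∈ S, Real.exp (birkhoff T φ n x)}

set_option linter.unusedSectionVars false

section Aux

variable {X : Type*} [MetricSpace X]

lemma birkhoff_add (T : X → X) (φ : X → ℝ) (a b : ℕ) (x : X) :
    birkhoff T φ (a + b) x = birkhoff T φ a x + birkhoff T φ b (T^[a] x) := by
  induction b with
  | zero => simp [birkhoff]
  | succ b ih =>
    have h1 : a + (b + 1) = (a + b) + 1 := by omega
    rw [h1]
    unfold birkhoff at *
    rw [Finset.sum_range_succ, Finset.sum_range_succ, ih, ← Function.iterate_add_apply,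
      add_comm b a]
    ring

lemma birkhoff_le {T : X → X} {φ : X → ℝ} {C : ℝ} (hC : ∀ x, φ x ≤ C) (n : ℕ) (x : X) :
    birkhoff T φ n x ≤ (n : ℝ) * C := by
  calc birkhoff T φ n x ≤ ∑ _i ∈ Finset.range n, C :=
        Finset.sum_le_sum fun i _ => hC _
    _ = (n : ℝ) * C := by simp [mul_comm]

lemma le_birkhoff {T : X → X} {φ : X → ℝ} {c : ℝ} (hc : ∀ x, c ≤ φ x) (n : ℕ) (x : X) :
    (n : ℝ) * c ≤ birkhoff T φ n x := by
  calc (n : ℝ) * c = ∑ _i ∈ Finset.range n, c := by simp [mul_comm]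
    _ ≤ birkhoff T φ n x := Finset.sum_le_sum fun i _ => hc _

variable [CompactSpace X]

lemma bddAbove_Zset (T : X → X) (φ : X → ℝ) {C : ℝ} (hC : ∀ x, φ x ≤ C) (n : ℕ)
    {ε : ℝ} (hε : 0 < ε) :
    BddAbove {r | ∃ S : Finset X, IsSep T n ε ↑S ∧ r = ∑ x ∈ S, Real.exp (birkhoff T φ n x)} := by
  obtain ⟨t, -, htf, htcov⟩ := finite_cover_balls_of_compact (isCompact_univ : IsCompact (Set.univ : Set X)) (half_pos hε)
  classical
  set tF : Finset X := htf.toFinset with htF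
  have hmem : ∀ (x : X) (k : ℕ), ∃ y, y ∈ tF ∧ dist (T^[k] x) y < ε / 2 := by
    intro x k
    have := htcov (Set.mem_univ (T^[k] x))
    simp only [Set.mem_iUnion, Metric.mem_ball] at this
    obtain ⟨y, hy, hxy⟩ := this
    exact ⟨y, by simpa [htF] using hy, hxy⟩
  choose c hc1 hc2 using hmem
  refine ⟨(tF.card ^ n : ℝ) * Real.exp ((n : ℝ) * C), ?_⟩
  rintro r ⟨S, hS, rfl⟩
  have hcard : S.card ≤ tF.card ^ n := by
    have hinj : Set.InjOn (fun x (i : Fin n) => (⟨c x i, hc1 x i⟩ : {y // y ∈ tF})) ↑S := by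
      intro x hx y hy hxy
      by_contra hne
      obtain ⟨k, hk, hd⟩ := hS x hx y hy hne
      have hck : c x k = c y k := congrArg Subtype.val (congrFun hxy ⟨k, hk⟩)
      have h1 := hc2 x k
      have h2 := hc2 y k
      rw [hck] at h1
      have : dist (T^[k] x) (T^[k] y) < ε := by
        calc dist (T^[k] x) (T^[k] y) ≤ dist (T^[k] x) (c y k) + dist (T^[k] y) (c y k) :=
          dist_triangle_right _ _ _
        _ < ε / 2 + ε / 2 := add_lt_add h1 h2
        _ = ε := add_halves ε
      linarith
    have := Finset.card_le_card_of_injOn _ (fun x _ => Finset.mem_univ _) hinj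
    simpa [Fintype.card_fun] using this
  calc ∑ x ∈ S, Real.exp (birkhoff T φ n x)
      ≤ ∑ _x ∈ S, Real.exp ((n : ℝ) * C) :=
        Finset.sum_le_sum fun x _ => Real.exp_le_exp.2 (birkhoff_le hC n x)
    _ = (S.card : ℝ) * Real.exp ((n : ℝ) * C) := by simp [mul_comm]
    _ ≤ (tF.card ^ n : ℝ) * Real.exp ((n : ℝ) * C) := by
        have : (S.card : ℝ) ≤ (tF.card ^ n : ℝ) := by exact_mod_cast hcard
        exact mul_le_mul_of_nonneg_right this (Real.exp_nonneg _)

lemma sum_le_partFn (T : X → X) (φ : X → ℝ) {C : ℝ} (hC : ∀ x, φ x ≤ C) (n : ℕ)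
    {ε : ℝ} (hε : 0 < ε) {S : Finset X} (hS : IsSep T n ε ↑S) :
    ∑ x ∈ S, Real.exp (birkhoff T φ n x) ≤ partFn T φ n ε :=
  le_csSup (bddAbove_Zset T φ hC n hε) ⟨S, hS, rfl⟩

lemma exp_le_partFn (T : X → X) (φ : X → ℝ) {C : ℝ} (hC : ∀ x, φ x ≤ C) (n : ℕ)
    {ε : ℝ} (hε : 0 < ε) (x : X) :
    Real.exp (birkhoff T φ n x) ≤ partFn T φ n ε := by
  have hsep : IsSep T n ε ↑({x} : Finset X) := by
    intro a ha b hb hab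
    simp only [Finset.coe_singleton, Set.mem_singleton_iff] at ha hb
    exact absurd (ha.trans hb.symm) hab
  have := sum_le_partFn T φ hC n hε hsep
  simpa using this

lemma partFn_pos (T : X → X) (φ : X → ℝ) {C : ℝ} (hC : ∀ x, φ x ≤ C) (n : ℕ)
    {ε : ℝ} (hε : 0 < ε) [Nonempty X] : 0 < partFn T φ n ε :=
  lt_of_lt_of_le (Real.exp_pos _) (exp_le_partFn T φ hC n hε (Classical.arbitrary X))

end Aux

section Exp

variable {X : Type*} [MetricSpace X] [CompactSpace X]

local notation "perm" T => ((Homeomorph.toEquiv T : Equiv.Perm X))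

lemma iterate_eq_zpow (T : X ≃ₜ X) (k : ℕ) (x : X) :
    (⇑T)^[k] x = ((perm T) ^ (k : ℤ)) x := by
  rw [zpow_natCast]; rfl

lemma zpow_comp (T : X ≃ₜ X) (a b : ℤ) (x : X) :
    ((perm T) ^ a) (((perm T) ^ b) x) = ((perm T) ^ (a + b)) x := by
  rw [zpow_add, Equiv.Perm.mul_apply]

lemma continuous_zpow' (T : X ≃ₜ X) (j : ℤ) : Continuous ⇑((perm T) ^ j) := by
  obtain ⟨k⟩ | ⟨k⟩ := j
  · show Continuous ⇑((perm T) ^ (k : ℤ))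
    rw [zpow_natCast, ← Equiv.Perm.iterate_eq_pow]
    exact T.continuous.iterate k
  · rw [zpow_negSucc, ← inv_pow, ← Equiv.Perm.iterate_eq_pow]
    show Continuous (⇑T.symm)^[k+1]
    exact T.symm.continuous.iterate _

lemma uniform_expansivity (T : X ≃ₜ X) {δ : ℝ} (hδ : 0 < δ) (hexp : Expansive T δ) :
    ∃ N₀ : ℕ, ∀ x y : X,
      (∀ j : ℤ, |j| ≤ (N₀ : ℤ) → dist (((perm T) ^ j) x) (((perm T) ^ j) y) ≤ δ) →
      dist x y ≤ δ / 3 := by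
  by_contra h
  push_neg at h
  set t : ℕ → Set (X × X) := fun N =>
    {p | δ / 3 ≤ dist p.1 p.2 ∧
      ∀ j : ℤ, |j| ≤ (N : ℤ) → dist (((perm T) ^ j) p.1) (((perm T) ^ j) p.2) ≤ δ} with ht
  have htcl : ∀ N, IsClosed (t N) := by
    intro N
    have h1 : IsClosed {p : X × X | δ / 3 ≤ dist p.1 p.2} :=
      isClosed_le continuous_const (continuous_fst.dist continuous_snd)
    have h2 : IsClosed {p : X × X |
        ∀ j : ℤ, |j| ≤ (N : ℤ) → dist (((perm T) ^ j) p.1) (((perm T) ^ j) p.2) ≤ δ} := by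
      have : {p : X × X |
          ∀ j : ℤ, |j| ≤ (N : ℤ) → dist (((perm T) ^ j) p.1) (((perm T) ^ j) p.2) ≤ δ} =
          ⋂ (j : ℤ) (_ : |j| ≤ (N : ℤ)),
            {p : X × X | dist (((perm T) ^ j) p.1) (((perm T) ^ j) p.2) ≤ δ} := by
        ext p; simp [Set.mem_iInter]
      rw [this]
      refine isClosed_iInter fun j => isClosed_iInter fun _ => ?_
      exact isClosed_le
        (((continuous_zpow' T j).comp continuous_fst).dist
          ((continuous_zpow' T j).comp continuous_snd)) continuous_const
    exact h1.inter h2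
  have htn : ∀ N, (t N).Nonempty := by
    intro N
    obtain ⟨x, y, hxy, hd⟩ := h N
    exact ⟨(x, y), le_of_lt hd, hxy⟩
  have htd : ∀ N, t (N + 1) ⊆ t N := by
    intro N p hp
    exact ⟨hp.1, fun j hj => hp.2 j (by omega)⟩
  obtain ⟨p, hp⟩ := IsCompact.nonempty_iInter_of_sequence_nonempty_isCompact_isClosed t htd htn
    ((htcl 0).isCompact) htcl
  have hpall : ∀ N, p ∈ t N := by
    intro N; exact Set.mem_iInter.1 hp N
  have hne : p.1 ≠ p.2 := by
    intro hEq
    have := (hpall 0).1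
    rw [hEq] at this
    simp at this
    linarith
  obtain ⟨j, hj⟩ := hexp p.1 p.2 hne
  have := (hpall j.natAbs).2 j (by rw [Int.abs_eq_natAbs])
  linarith

end Exp

section Scale

variable {X : Type*} [MetricSpace X] [CompactSpace X] [Nonempty X]

local notation "perm" T => ((Homeomorph.toEquiv T : Equiv.Perm X))

lemma partFn_scale_le (T : X ≃ₜ X) (φ : X → ℝ) {C : ℝ} (hC : ∀ x, |φ x| ≤ C)
    {δ : ℝ} (hδ : 0 < δ) (N₀ : ℕ)
    (hN₀ : ∀ x y : X,
      (∀ j : ℤ, |j| ≤ (N₀ : ℤ) → dist (((perm T) ^ j) x) (((perm T) ^ j) y) ≤ δ) →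
      dist x y ≤ δ / 3) (N : ℕ) :
    partFn ⇑T φ N (δ / 3) ≤
      Real.exp (2 * N₀ * C) * partFn ⇑T φ (N + 2 * N₀) δ := by
  have hCu : ∀ x, φ x ≤ C := fun x => (abs_le.1 (hC x)).2
  have hCl : ∀ x, -C ≤ φ x := fun x => (abs_le.1 (hC x)).1
  have hδ3 : 0 < δ / 3 := by linarith
  have hZpos := partFn_pos (⇑T) φ hCu (N + 2 * N₀) hδ
  apply Real.sSup_le
  · rintro r ⟨S, hS, rfl⟩
    classical
    set σ : X → X := ⇑((perm T) ^ (-(N₀ : ℤ))) with hσ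
    have hσinj : Function.Injective σ := Equiv.injective _
    set S' : Finset X := S.image σ with hS'
    -- iterates of σ x
    have hiter : ∀ (i : ℕ) (x : X), (⇑T)^[i] (σ x) = ((perm T) ^ ((i : ℤ) - N₀)) x := by
      intro i x
      rw [iterate_eq_zpow, hσ, zpow_comp, sub_eq_add_neg]
    -- S' is (N + 2N₀, δ)-separated
    have hsep : IsSep ⇑T (N + 2 * N₀) δ ↑S' := by
      intro x' hx' y' hy' hne
      simp only [hS', Finset.coe_image, Set.mem_image, Finset.mem_coe] at hx' hy'
      obtain ⟨x, hx, rfl⟩ := hx'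
      obtain ⟨y, hy, rfl⟩ := hy'
      have hxy : x ≠ y := fun hEq => hne (by rw [hEq])
      obtain ⟨k, hk, hd⟩ := hS x hx y hy hxy
      have hnot : ¬ dist ((⇑T)^[k] x) ((⇑T)^[k] y) ≤ δ / 3 := not_le.2 hd
      have := mt (hN₀ ((⇑T)^[k] x) ((⇑T)^[k] y)) hnot
      push_neg at this
      obtain ⟨j, hj, hdj⟩ := this
      have hjl := (abs_le.1 hj).1
      have hju := (abs_le.1 hj).2
      set tz : ℤ := (k : ℤ) + j + N₀ with htz
      have htz0 : 0 ≤ tz := by omega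
      set tn : ℕ := tz.toNat with htn
      have htzn : (tn : ℤ) = tz := Int.toNat_of_nonneg htz0
      refine ⟨tn, by omega, ?_⟩
      have hx1 : (⇑T)^[tn] (σ x) = ((perm T) ^ j) ((⇑T)^[k] x) := by
        rw [hiter, iterate_eq_zpow, zpow_comp, htzn]
        have he : tz - (N₀ : ℤ) = j + (k : ℤ) := by omega
        rw [he]
      have hy1 : (⇑T)^[tn] (σ y) = ((perm T) ^ j) ((⇑T)^[k] y) := by
        rw [hiter, iterate_eq_zpow, zpow_comp, htzn]
        have he : tz - (N₀ : ℤ) = j + (k : ℤ) := by omega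
        rw [he]
      rw [hx1, hy1]
      exact hdj
    -- Birkhoff comparison
    have hbk : ∀ x : X, birkhoff ⇑T φ N x - 2 * N₀ * C ≤ birkhoff ⇑T φ (N + 2 * N₀) (σ x) := by
      intro x
      have hsplit : N + 2 * N₀ = N₀ + (N + N₀) := by omega
      have hfix : (⇑T)^[N₀] (σ x) = x := by
        rw [hiter]
        simp
      rw [hsplit, birkhoff_add, hfix, birkhoff_add]
      have h1 : -((N₀ : ℝ) * C) ≤ birkhoff ⇑T φ N₀ (σ x) := by
        have := le_birkhoff (T := ⇑T) hCl N₀ (σ x)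
        linarith [this]
      have h2 : -((N₀ : ℝ) * C) ≤ birkhoff ⇑T φ N₀ ((⇑T)^[N] x) := by
        have := le_birkhoff (T := ⇑T) hCl N₀ ((⇑T)^[N] x)
        linarith [this]
      linarith
    have hsum : ∑ x ∈ S, Real.exp (birkhoff ⇑T φ N x) ≤
        Real.exp (2 * N₀ * C) * ∑ x' ∈ S', Real.exp (birkhoff ⇑T φ (N + 2 * N₀) x') := by
      rw [hS', Finset.sum_image (fun a _ b _ h => hσinj h), Finset.mul_sum]
      refine Finset.sum_le_sum fun x _ => ?_
      rw [← Real.exp_add]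
      exact Real.exp_le_exp.2 (by linarith [hbk x])
    refine hsum.trans ?_
    exact mul_le_mul_of_nonneg_left (sum_le_partFn (⇑T) φ hCu _ hδ hsep)
      (Real.exp_nonneg _)
  · positivity

end Scale

section Glue

variable {X : Type*} [MetricSpace X] [CompactSpace X] [Nonempty X]

lemma glue_pow_le (T : X ≃ₜ X) (φ : X → ℝ) {C : ℝ} (hC : ∀ x, φ x ≤ C)
    {b : ℝ} (hb : ∀ x, b ≤ φ x)
    {δ : ℝ} (hδ : 0 < δ) {f : ℕ → ℕ} (hspec : NonUnifSpec (⇑T) f (δ / 3))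
    {g : ℕ → ℝ} (hg : HasVarBounds (⇑T) φ g (δ / 3))
    (n k : ℕ) {S : Finset X} (hS : IsSep (⇑T) n δ ↑S) :
    (∑ x ∈ S, Real.exp (birkhoff ⇑T φ n x)) ^ k ≤
      Real.exp ((k : ℝ) * (g n - (f n : ℝ) * b)) *
        partFn ⇑T φ (k * (n + f n)) (δ / 3) := by
  classical
  have hδ3 : 0 < δ / 3 := by linarith
  set m : ℕ := f n with hm
  set q : ℕ := n + m with hq
  -- choose shadowing points
  have hzex : ∀ w : ℕ → X, ∃ z, Shadows (⇑T) (δ / 3) k w (fun _ => n) (fun _ => m) z := by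
    intro w
    exact hspec k w (fun _ => n) (fun _ => m) (fun i _ => by simp [hm])
  choose z hz using hzex
  -- rewrite the shadow property with constant gaps
  have hzs : ∀ (w : ℕ → X), ∀ i < k, ∀ l < n,
      dist ((⇑T)^[l + i * q] (z w)) ((⇑T)^[l] (w i)) < δ / 3 := by
    intro w i hi l hl
    have := hz w i hi l hl
    simpa [Finset.sum_const, Finset.card_range, hq, mul_comm] using this
  -- Birkhoff lower bound for shadowing points
  have hbk : ∀ (w : ℕ → X), ∀ j ≤ k,
      (∑ i ∈ Finset.range j, birkhoff ⇑T φ n (w i)) + (j : ℝ) * ((m : ℝ) * b - g n) ≤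
        birkhoff ⇑T φ (j * q) (z w) := by
    intro w j
    induction j with
    | zero =>
        intro _
        simp [birkhoff]
    | succ j ih =>
      intro hjk
      have hj : j < k := by omega
      have hIH := ih (by omega)
      have hsplit : (j + 1) * q = j * q + (n + m) := by simp only [hq]; ring
      rw [hsplit, birkhoff_add, birkhoff_add]
      -- block part
      have hblock : birkhoff ⇑T φ n (w j) - g n ≤ birkhoff ⇑T φ n ((⇑T)^[j * q] (z w)) := by
        have hcl : ∀ l < n, dist ((⇑T)^[l] ((⇑T)^[j * q] (z w))) ((⇑T)^[l] (w j)) < δ / 3 := by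
          intro l hl
          rw [← Function.iterate_add_apply]
          exact hzs w j hj l hl
        have := hg n n le_rfl ((⇑T)^[j * q] (z w)) (w j) hcl
        have h2 := (abs_le.1 this).1
        linarith
      -- gap part
      have hgap : (m : ℝ) * b ≤ birkhoff ⇑T φ m ((⇑T)^[n] ((⇑T)^[j * q] (z w))) :=
        le_birkhoff (T := ⇑T) hb m _
      rw [Finset.sum_range_succ]
      push_cast
      linarith
  -- the image finset of shadowing points
  set ext : (Fin k → X) → (ℕ → X) := fun p i => if h : i < k then p ⟨i, h⟩ else Classical.arbitrary X
    with hext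
  have hextlt : ∀ (p : Fin k → X) (i : ℕ) (h : i < k), ext p i = p ⟨i, h⟩ := by
    intro p i h; simp [hext, h]
  set pF : Finset (Fin k → X) := Fintype.piFinset (fun _ => S) with hpF
  -- separation of glued points
  have hsep2 : ∀ p1 ∈ pF, ∀ p2 ∈ pF, p1 ≠ p2 → ∃ t < k * q,
      δ / 3 < dist ((⇑T)^[t] (z (ext p1))) ((⇑T)^[t] (z (ext p2))) := by
    intro p1 hp1 p2 hp2 hne
    have : ∃ i, p1 i ≠ p2 i := by
      by_contra hcon
      push_neg at hcon
      exact hne (funext hcon)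
    obtain ⟨i, hi⟩ := this
    have hm1 : p1 i ∈ S := Fintype.mem_piFinset.1 hp1 i
    have hm2 : p2 i ∈ S := Fintype.mem_piFinset.1 hp2 i
    obtain ⟨l, hl, hd⟩ := hS (p1 i) hm1 (p2 i) hm2 hi
    refine ⟨l + (i : ℕ) * q, ?_, ?_⟩
    · have hik : (i : ℕ) < k := i.isLt
      have h1 : l + (i : ℕ) * q < ((i : ℕ) + 1) * q := by
        have hnq : n ≤ q := by omega
        calc l + (i : ℕ) * q < n + (i : ℕ) * q := by omega
          _ ≤ q + (i : ℕ) * q := by omega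
          _ = ((i : ℕ) + 1) * q := by ring
      have h2 : ((i : ℕ) + 1) * q ≤ k * q := Nat.mul_le_mul_right q (by omega)
      omega
    · have h1 := hzs (ext p1) i i.isLt l hl
      have h2 := hzs (ext p2) i i.isLt l hl
      rw [hextlt p1 i i.isLt] at h1
      rw [hextlt p2 i i.isLt] at h2
      simp only [Fin.eta] at h1 h2
      have h1' : dist ((⇑T)^[l] (p1 i)) ((⇑T)^[l + (i : ℕ) * q] (z (ext p1))) < δ / 3 := by
        rw [dist_comm]; exact h1
      have htri := dist_triangle4 ((⇑T)^[l] (p1 i)) ((⇑T)^[l + (i : ℕ) * q] (z (ext p1)))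
        ((⇑T)^[l + (i : ℕ) * q] (z (ext p2))) ((⇑T)^[l] (p2 i))
      linarith
  -- injectivity
  have hinj : Set.InjOn (fun p => z (ext p)) ↑pF := by
    intro p1 hp1 p2 hp2 hEq
    by_contra hne
    obtain ⟨t, ht, hd⟩ := hsep2 p1 hp1 p2 hp2 hne
    simp only [hEq] at hd
    simp at hd
    linarith
  set Z : Finset X := pF.image (fun p => z (ext p)) with hZ
  have hZsep : IsSep (⇑T) (k * q) (δ / 3) ↑Z := by
    intro z1 hz1 z2 hz2 hne
    simp only [hZ, Finset.coe_image, Set.mem_image, Finset.mem_coe] at hz1 hz2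
    obtain ⟨p1, hp1, rfl⟩ := hz1
    obtain ⟨p2, hp2, rfl⟩ := hz2
    have hpne : p1 ≠ p2 := fun hEq => hne (by rw [hEq])
    exact hsep2 p1 hp1 p2 hp2 hpne
  -- main computation
  have step1 : (∑ x ∈ S, Real.exp (birkhoff ⇑T φ n x)) ^ k =
      ∑ p ∈ pF, ∏ i : Fin k, Real.exp (birkhoff ⇑T φ n (p i)) := by
    have hps := Finset.prod_univ_sum (fun _ : Fin k => S)
      (fun _ x => Real.exp (birkhoff ⇑T φ n x))
    rw [hpF, ← hps]
    simp [Finset.prod_const]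
  have step2 : ∀ p ∈ pF, ∏ i : Fin k, Real.exp (birkhoff ⇑T φ n (p i)) ≤
      Real.exp ((k : ℝ) * (g n - (m : ℝ) * b)) *
        Real.exp (birkhoff ⇑T φ (k * q) (z (ext p))) := by
    intro p hp
    rw [← Real.exp_sum, ← Real.exp_add]
    apply Real.exp_le_exp.2
    have hsum : ∑ i : Fin k, birkhoff ⇑T φ n (p i) =
        ∑ i ∈ Finset.range k, birkhoff ⇑T φ n (ext p i) := by
      rw [← Fin.sum_univ_eq_sum_range (fun i => birkhoff ⇑T φ n (ext p i)) k]
      refine Finset.sum_congr rfl fun i _ => ?_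
      rw [hextlt p i i.isLt]
    rw [hsum]
    have := hbk (ext p) k le_rfl
    linarith
  have step3 : ∑ p ∈ pF, Real.exp (birkhoff ⇑T φ (k * q) (z (ext p))) =
      ∑ y ∈ Z, Real.exp (birkhoff ⇑T φ (k * q) y) := by
    rw [hZ, Finset.sum_image (fun a ha b hb h => hinj ha hb h)]
  calc (∑ x ∈ S, Real.exp (birkhoff ⇑T φ n x)) ^ k
      = ∑ p ∈ pF, ∏ i : Fin k, Real.exp (birkhoff ⇑T φ n (p i)) := step1
    _ ≤ ∑ p ∈ pF, Real.exp ((k : ℝ) * (g n - (m : ℝ) * b)) *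
          Real.exp (birkhoff ⇑T φ (k * q) (z (ext p))) := Finset.sum_le_sum step2
    _ = Real.exp ((k : ℝ) * (g n - (m : ℝ) * b)) *
          ∑ y ∈ Z, Real.exp (birkhoff ⇑T φ (k * q) y) := by
        rw [← Finset.mul_sum, step3]
    _ ≤ Real.exp ((k : ℝ) * (g n - (m : ℝ) * b)) * partFn ⇑T φ (k * q) (δ / 3) :=
        mul_le_mul_of_nonneg_left (sum_le_partFn (⇑T) φ hC _ hδ3 hZsep) (Real.exp_nonneg _)

end Glue

set_option linter.unusedVariables false

/-- Upper bound on the partition function under non-uniform specification: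
`Z(X,T,φ,n,δ) ≤ exp((n + f n)·P − f n · inf φ + g n)`. -/
theorem partFn_upper_bound_spec {X : Type*} [MetricSpace X] [CompactSpace X] [Nonempty X]
    (T : X ≃ₜ X) (δ : ℝ) (hδ : 0 < δ) (hexp : Expansive T δ)
    (f : ℕ → ℕ) (hfm : Monotone f) (hspec : NonUnifSpec (⇑T) f (δ / 3))
    (φ : X → ℝ) (hφ : Continuous φ) (g : ℕ → ℝ) (hgm : Monotone g)
    (hg : HasVarBounds (⇑T) φ g (δ / 3))
    (P : ℝ)
    (hP : Tendsto (fun n : ℕ => Real.log (partFn (⇑T) φ n δ) / n) atTop (𝓝 P)) :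
    ∀ n : ℕ, partFn (⇑T) φ n δ ≤
      Real.exp (((n : ℝ) + f n) * P - (f n : ℝ) * sInf (Set.range φ) + g n) := by
  classical
  -- constants
  obtain ⟨xC, -, hxC'⟩ := (isCompact_univ : IsCompact (Set.univ : Set X)).exists_isMaxOn
    Set.univ_nonempty (continuous_abs.comp hφ).continuousOn
  have hxC : ∀ x : X, |φ x| ≤ |φ xC| := fun x => hxC' (Set.mem_univ x)
  set C : ℝ := |φ xC| with hCdef
  have hC : ∀ x, |φ x| ≤ C := hxC
  have hCu : ∀ x, φ x ≤ C := fun x => (abs_le.1 (hC x)).2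
  set b : ℝ := sInf (Set.range φ) with hbdef
  obtain ⟨xm, -, hxm'⟩ := (isCompact_univ : IsCompact (Set.univ : Set X)).exists_isMinOn
    Set.univ_nonempty hφ.continuousOn
  have hxm : ∀ x : X, φ xm ≤ φ x := fun x => hxm' (Set.mem_univ x)
  have hbddB : BddBelow (Set.range φ) := by
    refine ⟨φ xm, ?_⟩
    rintro _ ⟨y, rfl⟩
    exact hxm y
  have hb : ∀ x, b ≤ φ x := fun x => csInf_le hbddB ⟨x, rfl⟩
  -- lower bounds for the partition function
  have hZlow : ∀ M : ℕ, Real.exp ((M : ℝ) * b) ≤ partFn ⇑T φ M δ := fun M =>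
    le_trans (Real.exp_le_exp.2 (le_birkhoff (T := ⇑T) hb M xm))
      (exp_le_partFn (⇑T) φ hCu M hδ xm)
  have hZpos : ∀ M : ℕ, 0 < partFn ⇑T φ M δ := fun M => partFn_pos (⇑T) φ hCu M hδ
  -- b ≤ P
  have hbP : b ≤ P := by
    refine ge_of_tendsto hP ?_
    filter_upwards [eventually_ge_atTop 1] with M hM
    have hMpos : (0 : ℝ) < M := by exact_mod_cast hM
    have h2 : (M : ℝ) * b ≤ Real.log (partFn ⇑T φ M δ) := by
      rw [← Real.log_exp ((M : ℝ) * b)]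
      exact Real.log_le_log (Real.exp_pos _) (hZlow M)
    rw [le_div_iff₀ hMpos]
    linarith
  intro n
  by_cases hn : n = 0
  · -- degenerate case n = 0
    subst hn
    apply Real.sSup_le _ (Real.exp_pos _).le
    rintro r ⟨S, hS, rfl⟩
    have hcard : S.card ≤ 1 := by
      refine Finset.card_le_one.2 fun a ha c hc => ?_
      by_contra hne
      obtain ⟨k, hk, -⟩ := hS a ha c hc hne
      omega
    have hr : ∑ x ∈ S, Real.exp (birkhoff ⇑T φ 0 x) = (S.card : ℝ) := by
      simp [birkhoff]
    rw [hr]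
    have h1 : (S.card : ℝ) ≤ 1 := by exact_mod_cast hcard
    refine h1.trans ?_
    rw [← Real.exp_zero]
    apply Real.exp_le_exp.2
    have hg0 : 0 ≤ g 0 := by
      have := hg 0 0 le_rfl xm xm (fun j hj => absurd hj (by omega))
      simpa using this
    have hfP : 0 ≤ (f 0 : ℝ) * (P - b) :=
      mul_nonneg (Nat.cast_nonneg _) (sub_nonneg.2 hbP)
    push_cast
    nlinarith
  · -- main case n ≥ 1
    have hq1 : 1 ≤ n + f n := by omega
    obtain ⟨N₀, hN₀⟩ := uniform_expansivity T hδ hexp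
    set D : ℝ := 2 * (N₀ : ℝ) * C with hDdef
    apply Real.sSup_le _ (Real.exp_pos _).le
    rintro r ⟨S, hS, rfl⟩
    set A : ℝ := ∑ x ∈ S, Real.exp (birkhoff ⇑T φ n x) with hAdef
    rcases Finset.eq_empty_or_nonempty S with rfl | hSne
    · simp only [hAdef, Finset.sum_empty] at *
      simp
      positivity
    have hApos : 0 < A := Finset.sum_pos (fun x _ => Real.exp_pos _) hSne
    -- key inequality for each k
    have key : ∀ k : ℕ,
        A ^ k ≤ Real.exp ((k : ℝ) * (g n - (f n : ℝ) * b) + D) *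
          partFn ⇑T φ (k * (n + f n) + 2 * N₀) δ := by
      intro k
      have h1 := glue_pow_le T φ hCu hb hδ hspec hg n k hS
      have h2 := partFn_scale_le T φ hC hδ N₀ hN₀ (k * (n + f n))
      calc A ^ k ≤ Real.exp ((k : ℝ) * (g n - (f n : ℝ) * b)) *
            partFn ⇑T φ (k * (n + f n)) (δ / 3) := h1
        _ ≤ Real.exp ((k : ℝ) * (g n - (f n : ℝ) * b)) *
            (Real.exp (2 * N₀ * C) * partFn ⇑T φ (k * (n + f n) + 2 * N₀) δ) :=
          mul_le_mul_of_nonneg_left h2 (Real.exp_nonneg _)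
        _ = Real.exp ((k : ℝ) * (g n - (f n : ℝ) * b) + D) *
            partFn ⇑T φ (k * (n + f n) + 2 * N₀) δ := by
          rw [← mul_assoc, ← Real.exp_add, hDdef]
    -- logarithmic form
    have keylog : ∀ k : ℕ, 1 ≤ k → Real.log A ≤
        ((k : ℝ) * (g n - (f n : ℝ) * b) + D +
          Real.log (partFn ⇑T φ (k * (n + f n) + 2 * N₀) δ)) / k := by
      intro k hk
      have hkpos : (0 : ℝ) < k := by exact_mod_cast hk
      have h2 := Real.log_le_log (pow_pos hApos k) (key k)
      rw [Real.log_pow, Real.log_mul (Real.exp_ne_zero _) (ne_of_gt (hZpos _)),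
        Real.log_exp] at h2
      rw [le_div_iff₀ hkpos, mul_comm]
      linarith
    -- the limit of the right-hand side
    set L : ℕ → ℝ := fun k =>
      ((k : ℝ) * (g n - (f n : ℝ) * b) + D +
        Real.log (partFn ⇑T φ (k * (n + f n) + 2 * N₀) δ)) / k with hLdef
    have hMtend : Tendsto (fun k : ℕ => k * (n + f n) + 2 * N₀) atTop atTop := by
      refine tendsto_atTop_mono (fun k => ?_) tendsto_id
      calc (id k : ℕ) = k * 1 := (mul_one k).symm
        _ ≤ k * (n + f n) := Nat.mul_le_mul_left k hq1
        _ ≤ k * (n + f n) + 2 * N₀ := Nat.le_add_right _ _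
    have hPZ : Tendsto (fun k : ℕ =>
        Real.log (partFn ⇑T φ (k * (n + f n) + 2 * N₀) δ) /
          ((k * (n + f n) + 2 * N₀ : ℕ) : ℝ)) atTop (𝓝 P) := hP.comp hMtend
    have hfrac : Tendsto (fun k : ℕ =>
        ((k * (n + f n) + 2 * N₀ : ℕ) : ℝ) / (k : ℝ)) atTop (𝓝 ((n + f n : ℕ) : ℝ)) := by
      have h0 : Tendsto (fun k : ℕ => ((n + f n : ℕ) : ℝ) + (2 * (N₀ : ℝ)) / (k : ℝ)) atTop
          (𝓝 (((n + f n : ℕ) : ℝ) + 0)) :=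
        tendsto_const_nhds.add (tendsto_const_div_atTop_nhds_zero_nat _)
      rw [add_zero] at h0
      refine Tendsto.congr' ?_ h0
      filter_upwards [eventually_ge_atTop 1] with k hk
      have hkpos : (0 : ℝ) < k := by exact_mod_cast hk
      field_simp
      push_cast
      ring
    have hterm : Tendsto (fun k : ℕ =>
        Real.log (partFn ⇑T φ (k * (n + f n) + 2 * N₀) δ) / (k : ℝ)) atTop
        (𝓝 (P * ((n + f n : ℕ) : ℝ))) := by
      refine Tendsto.congr' ?_ (hPZ.mul hfrac)
      filter_upwards [eventually_ge_atTop 1] with k hk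
      have hM1 : 1 ≤ k * (n + f n) + 2 * N₀ := by
        have := Nat.mul_le_mul_left k hq1
        omega
      have hM0 : ((k * (n + f n) + 2 * N₀ : ℕ) : ℝ) ≠ 0 := by
        have : (0 : ℝ) < ((k * (n + f n) + 2 * N₀ : ℕ) : ℝ) := by exact_mod_cast hM1
        linarith
      field_simp
    have hlim : Tendsto L atTop (𝓝 ((g n - (f n : ℝ) * b) + P * ((n + f n : ℕ) : ℝ))) := by
      have h1 : Tendsto (fun k : ℕ => (g n - (f n : ℝ) * b) +
          (D / (k : ℝ) + Real.log (partFn ⇑T φ (k * (n + f n) + 2 * N₀) δ) / (k : ℝ)))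
          atTop (𝓝 ((g n - (f n : ℝ) * b) + (0 + P * ((n + f n : ℕ) : ℝ)))) :=
        tendsto_const_nhds.add ((tendsto_const_div_atTop_nhds_zero_nat D).add hterm)
      rw [zero_add] at h1
      refine Tendsto.congr' ?_ h1
      filter_upwards [eventually_ge_atTop 1] with k hk
      have hkpos : (0 : ℝ) < k := by exact_mod_cast hk
      rw [hLdef]
      field_simp
      ring
    have hlog : Real.log A ≤ (g n - (f n : ℝ) * b) + P * ((n + f n : ℕ) : ℝ) := by
      refine ge_of_tendsto hlim ?_
      filter_upwards [eventually_ge_atTop 1] with k hk using keylog k hk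
    calc A = Real.exp (Real.log A) := (Real.exp_log hApos).symm
      _ ≤ Real.exp (((n : ℝ) + f n) * P - (f n : ℝ) * b + g n) := by
          apply Real.exp_le_exp.2
          have hcast : ((n + f n : ℕ) : ℝ) = (n : ℝ) + (f n : ℝ) := by push_cast; ring
          rw [hcast] at hlog
          nlinarith [hlog]
end

section
/- Let X_{k,h} be the bounded density shift with h(n) = nα + e(n), where α > 0 and e : ℕ → ℕ is increasing. Then (X_{k,h}, T) has non-uniform specification with gap bounds f(n) := 2e(n)/α. Concretely: for any words w₁,…,w_j in the language of X_{k,h} with lengths n₁,…,n_j, and any m₁,…,m_{j−1} with m_i ≥ max(2e(n_i)/α, 2e(n_{i+1})/α), the word w₁0^{m₁}w₂⋯0^{m_{j−1}}w_j belongs to the language of X_{k,h}. -/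
open Filter Topology MeasureTheory

/-- The bounded density shift: points `x ∈ {0,…,k}^ℤ` with all window sums bounded by `h`. -/
def BDShift (k : ℕ) (h : ℕ → ℝ) : Set (ℤ → ℕ) :=
  {x | (∀ i, x i ≤ k) ∧ ∀ (i : ℤ) (n : ℕ), ((∑ j ∈ Finset.range n, x (i + j) : ℕ) : ℝ) ≤ h n}

/-- A finite word is in the language of the bounded density shift if it appears in some point. -/
def InBDLang (k : ℕ) (h : ℕ → ℝ) (w : List ℕ) : Prop :=
  ∃ x ∈ BDShift k h, ∃ i : ℤ, ∀ j < w.length, x (i + j) = w.getD j 0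

/-!
A word lies in the language iff its letters are at most `k` and every factor `u` has
`Σu ≤ |u|·α + e |u|` (conversely, extend the word by zeros to a point of the shift).
Glue the words from left to right and carry a sharper bound on suffixes: every suffix `u` of the
word built so far has `Σu ≤ |u|·α + e nᵢ`, where `wᵢ` is its last block. Since `mᵢ·α ≥ e nᵢ`, the
gap `0^{mᵢ}` absorbs this excess, so the suffixes of `… wᵢ 0^{mᵢ}` satisfy `Σu ≤ |u|·α`. A factor of
`… wᵢ 0^{mᵢ} wᵢ₊₁` reaching into `wᵢ₊₁` therefore only pays the excess `e` of its part in `wᵢ₊₁`.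
-/

def OccursAt (x : ℤ → ℕ) (i : ℤ) (w : List ℕ) : Prop :=
  ∀ j < w.length, x (i + j) = w.getD j 0

namespace OccursAt

variable {x : ℤ → ℕ} {i : ℤ} {w : List ℕ}

theorem drop (h : OccursAt x i w) (p : ℕ) : OccursAt x (i + p) (w.drop p) := by
  intro j hj
  rw [List.length_drop] at hj
  rw [add_assoc, ← Nat.cast_add, h (p + j) (by omega)]
  simp [List.getD_eq_getElem?_getD]

theorem take (h : OccursAt x i w) (n : ℕ) : OccursAt x i (w.take n) := by
  intro j hj
  rw [List.length_take] at hj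
  rw [h j (by omega)]
  simp [List.getD_eq_getElem?_getD, show j < n by omega]

theorem of_infix {p u q : List ℕ} (h : OccursAt x i (p ++ u ++ q)) :
    OccursAt x (i + p.length) u := by
  simpa using (h.drop p.length).take u.length

theorem sum_eq (h : OccursAt x i w) : w.sum = ∑ j ∈ Finset.range w.length, x (i + j) := by
  induction w generalizing i with
  | nil => simp
  | cons a t ih =>
    have ha : x i = a := by simpa using h 0 (by simp)
    have ht : OccursAt x (i + 1) t := fun j hj => by
      simpa [add_assoc, add_comm (1 : ℤ)] using h (j + 1) (by simpa using hj)
    rw [List.sum_cons, List.length_cons, Finset.sum_range_succ', ih ht, ← ha]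
    simp [add_assoc, add_comm (1 : ℤ), add_comm (x i)]

theorem forall_mem_le {k : ℕ} (hx : ∀ i, x i ≤ k) (h : OccursAt x i w) : ∀ a ∈ w, a ≤ k := by
  intro a ha
  obtain ⟨j, hj, rfl⟩ := List.getElem_of_mem ha
  rw [← List.getD_eq_getElem _ 0 hj, ← h j hj]
  exact hx (i + j)

end OccursAt

def zeroExtend (w : List ℕ) (i : ℤ) : ℕ := if 0 ≤ i then w.getD i.toNat 0 else 0

theorem occursAt_zeroExtend (w : List ℕ) (a b : ℕ) :
    OccursAt (zeroExtend w) (-a) (List.replicate a 0 ++ w ++ List.replicate b 0) := by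
  intro j hj
  simp only [List.length_append, List.length_replicate] at hj
  simp only [zeroExtend, List.getD_eq_getElem?_getD, List.append_assoc, List.getElem?_append,
    List.getElem?_replicate, List.length_replicate]
  have htoNat : a ≤ j → (-(a : ℤ) + j).toNat = j - a := by omega
  split_ifs <;> first | omega | simp_all

theorem zeroExtend_le {k : ℕ} {w : List ℕ} (hw : ∀ a ∈ w, a ≤ k) (i : ℤ) : zeroExtend w i ≤ k := by
  unfold zeroExtend
  split_ifs
  · simp only [List.getD_eq_getElem?_getD]
    cases hj : w[i.toNat]? with
    | none => simp
    | some a => exact hw a (List.mem_of_getElem? hj)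
  · exact Nat.zero_le k

theorem List.suffix_append_iff {α : Type*} {u l₁ l₂ : List α} :
    u <:+ l₁ ++ l₂ ↔ u <:+ l₂ ∨ ∃ s, s <:+ l₁ ∧ u = s ++ l₂ := by
  constructor
  · rintro ⟨p, hp⟩
    rcases List.append_eq_append_iff.mp hp with ⟨s, rfl, rfl⟩ | ⟨s, rfl, rfl⟩
    · exact Or.inr ⟨s, List.suffix_append p s, rfl⟩
    · exact Or.inl (List.suffix_append s u)
  · rintro (h | ⟨s, hs, rfl⟩)
    · exact List.suffix_append_of_suffix h
    · exact (List.suffix_append_self_iff).2 hs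

def FactorBounded (g : ℕ → ℝ) (w : List ℕ) : Prop :=
  ∀ u, u <:+: w → (u.sum : ℝ) ≤ g u.length

def SuffixBounded (g : ℕ → ℝ) (w : List ℕ) : Prop :=
  ∀ u, u <:+ w → (u.sum : ℝ) ≤ g u.length

section Bounded

variable {g : ℕ → ℝ} {w l₁ l₂ : List ℕ}

theorem FactorBounded.suffixBounded (h : FactorBounded g w) : SuffixBounded g w :=
  fun u hu => h u hu.isInfix

theorem FactorBounded.nonneg_zero (h : FactorBounded g w) : 0 ≤ g 0 := by
  simpa using h [] (List.nil_infix)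

theorem FactorBounded.append (h₁ : FactorBounded g l₁) (h₂ : FactorBounded g l₂)
    (hcross : ∀ s t, s <:+ l₁ → t <+: l₂ → (((s ++ t).sum : ℕ) : ℝ) ≤ g (s ++ t).length) :
    FactorBounded g (l₁ ++ l₂) := by
  intro u hu
  rcases List.infix_append_iff.mp hu with hu | hu | ⟨s, t, rfl, hs, ht⟩
  exacts [h₁ u hu, h₂ u hu, hcross s t hs ht]

theorem SuffixBounded.append (h₂ : SuffixBounded g l₂)
    (hcross : ∀ s, s <:+ l₁ → (((s ++ l₂).sum : ℕ) : ℝ) ≤ g (s ++ l₂).length) :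
    SuffixBounded g (l₁ ++ l₂) := by
  intro u hu
  rcases List.suffix_append_iff.mp hu with hu | ⟨s, hs, rfl⟩
  exacts [h₂ u hu, hcross s hs]

theorem sum_eq_zero_of_subset_replicate {u : List ℕ} {m : ℕ} (hu : u ⊆ List.replicate m 0) :
    u.sum = 0 :=
  List.sum_eq_zero fun _ ha => List.eq_of_mem_replicate (hu ha)

theorem factorBounded_replicate_zero (hg : Monotone g) (h0 : 0 ≤ g 0) (m : ℕ) :
    FactorBounded g (List.replicate m 0) := fun u hu => by
  rw [sum_eq_zero_of_subset_replicate hu.subset, Nat.cast_zero]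
  exact h0.trans (hg (Nat.zero_le _))

theorem FactorBounded.append_replicate_zero (hg : Monotone g) (h : FactorBounded g w) (m : ℕ) :
    FactorBounded g (w ++ List.replicate m 0) := by
  refine h.append (factorBounded_replicate_zero hg h.nonneg_zero m) fun s t hs ht => ?_
  rw [List.sum_append, sum_eq_zero_of_subset_replicate ht.subset, add_zero]
  exact (h s hs.isInfix).trans (hg (by simp))

theorem FactorBounded.replicate_zero_append (hg : Monotone g) (h : FactorBounded g w) (m : ℕ) :
    FactorBounded g (List.replicate m 0 ++ w) := by
  refine (factorBounded_replicate_zero hg h.nonneg_zero m).append h fun s t hs ht => ?_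
  rw [List.sum_append, sum_eq_zero_of_subset_replicate hs.subset, zero_add]
  exact (h t ht.isInfix).trans (hg (by simp))

end Bounded

section Language

variable {k : ℕ} {h : ℕ → ℝ} {w : List ℕ}

theorem InBDLang.le_and_factorBounded (hw : InBDLang k h w) :
    (∀ a ∈ w, a ≤ k) ∧ FactorBounded h w := by
  obtain ⟨x, ⟨hxk, hxh⟩, i, hxw⟩ := hw
  refine ⟨OccursAt.forall_mem_le hxk hxw, ?_⟩
  rintro u ⟨p, q, rfl⟩
  rw [(OccursAt.of_infix hxw).sum_eq]
  exact hxh _ _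

theorem inBDLang_of_factorBounded (hh : Monotone h) (hk : ∀ a ∈ w, a ≤ k)
    (hw : FactorBounded h w) : InBDLang k h w := by
  have hocc : OccursAt (zeroExtend w) 0 w := by simpa using occursAt_zeroExtend w 0 0
  refine ⟨zeroExtend w, ⟨zeroExtend_le hk, fun i n => ?_⟩, 0, hocc⟩
  -- pad `w` with zeros until it covers the window `[i, i + n)`
  set a := i.natAbs
  set P := List.replicate a 0 ++ w ++ List.replicate (a + n) 0
  have hP : FactorBounded h P := (hw.replicate_zero_append hh a).append_replicate_zero hh _
  set u := (P.drop (i + a).toNat).take n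
  have hu : OccursAt (zeroExtend w) i u := by
    convert ((occursAt_zeroExtend w a (a + n)).drop (i + a).toNat).take n using 1
    omega
  have hlen : u.length = n := by simp [u, P]; omega
  have hinf : u <:+: P := (List.take_prefix _ _).isInfix.trans (List.drop_suffix _ _).isInfix
  rw [← hlen, ← hu.sum_eq]
  exact hP u hinf

theorem inBDLang_iff (hh : Monotone h) :
    InBDLang k h w ↔ (∀ a ∈ w, a ≤ k) ∧ FactorBounded h w :=
  ⟨InBDLang.le_and_factorBounded, fun hw => inBDLang_of_factorBounded hh hw.1 hw.2⟩

end Language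

section Credit

variable {α : ℝ} {e : ℕ → ℝ} {L B : List ℕ}

theorem monotone_mul_add (hα : 0 ≤ α) (he : Monotone e) :
    Monotone fun n : ℕ => n * α + e n :=
  fun _ _ hab => add_le_add (by gcongr) (he hab)

theorem SuffixBounded.append_replicate_zero (hα : 0 ≤ α) {t : ℝ} {m : ℕ}
    (hL : SuffixBounded (fun n => n * α + t) L) (ht : t ≤ m * α) :
    SuffixBounded (fun n => n * α) (L ++ List.replicate m 0) := by
  refine SuffixBounded.append (fun u hu => ?_) fun s hs => ?_
  · rw [sum_eq_zero_of_subset_replicate hu.subset, Nat.cast_zero]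
    positivity
  · have hs' := hL s hs
    simp only [List.sum_append, List.length_append, List.sum_replicate, List.length_replicate,
      smul_zero, add_zero, Nat.cast_add] at hs' ⊢
    linarith

theorem FactorBounded.suffixBounded_length (he : Monotone e)
    (hB : FactorBounded (fun n => n * α + e n) B) :
    SuffixBounded (fun n => n * α + e B.length) B :=
  fun u hu => (hB u hu.isInfix).trans (by simpa using he hu.length_le)

theorem FactorBounded.append_of_suffixBounded (he : Monotone e)
    (hL : FactorBounded (fun n => n * α + e n) L) (hLs : SuffixBounded (fun n => n * α) L)
    (hB : FactorBounded (fun n => n * α + e n) B) :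
    FactorBounded (fun n => n * α + e n) (L ++ B) :=
  hL.append hB fun s t hs ht => by
    have hs' := hLs s hs
    have ht' := hB t ht.isInfix
    have het : e t.length ≤ e (s ++ t).length := he (by simp)
    rw [List.sum_append, Nat.cast_add, List.length_append, Nat.cast_add] at *
    linarith

theorem SuffixBounded.append_of_factorBounded (he : Monotone e)
    (hLs : SuffixBounded (fun n => n * α) L) (hB : FactorBounded (fun n => n * α + e n) B) :
    SuffixBounded (fun n => n * α + e B.length) (L ++ B) :=
  (hB.suffixBounded_length he).append fun s hs => by
    have hs' := hLs s hs
    have hB' := hB B (List.infix_refl B)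
    rw [List.sum_append, Nat.cast_add, List.length_append, Nat.cast_add]
    linarith

end Credit

def joinWithZeros (w : ℕ → List ℕ) (m : ℕ → ℕ) : ℕ → List ℕ
  | 0 => w 0
  | n + 1 => joinWithZeros w m n ++ List.replicate (m n) 0 ++ w (n + 1)

theorem flatten_map_range_eq_joinWithZeros (w : ℕ → List ℕ) (m : ℕ → ℕ) (n : ℕ) :
    ((List.range (n + 1)).map
      (fun i => w i ++ List.replicate (if i + 1 < n + 1 then m i else 0) 0)).flatten =
      joinWithZeros w m n := by
  have hjoin : ∀ n, ((List.range n).map fun i => w i ++ List.replicate (m i) 0).flatten ++ w n =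
      joinWithZeros w m n := by
    intro n
    induction n with
    | zero => simp [joinWithZeros]
    | succ n ih => simp [joinWithZeros, ← ih, List.range_succ]
  rw [← hjoin, List.range_succ, List.map_append, List.flatten_append]
  simp only [lt_self_iff_false, if_false, List.replicate_zero, List.map_cons, List.map_nil,
    List.flatten_cons, List.flatten_nil, List.append_nil]
  congr 2
  exact List.map_congr_left fun i hi => by simp [List.mem_range.mp hi]

theorem joinWithZeros_le {k : ℕ} {w : ℕ → List ℕ} {m : ℕ → ℕ} {n : ℕ}
    (hw : ∀ i ≤ n, ∀ a ∈ w i, a ≤ k) : ∀ a ∈ joinWithZeros w m n, a ≤ k := by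
  induction n with
  | zero => exact hw 0 le_rfl
  | succ n ih =>
    have ih' := ih fun i hi => hw i (by omega)
    simp only [joinWithZeros, List.mem_append, List.mem_replicate]
    rintro a ((ha | ⟨-, rfl⟩) | ha)
    exacts [ih' a ha, Nat.zero_le k, hw _ le_rfl a ha]

theorem joinWithZeros_bounded {α : ℝ} {e : ℕ → ℝ} (hα : 0 ≤ α) (he : Monotone e)
    {w : ℕ → List ℕ} {m : ℕ → ℕ} (n : ℕ)
    (hw : ∀ i ≤ n, FactorBounded (fun l => l * α + e l) (w i))
    (hm : ∀ i < n, e (w i).length ≤ m i * α) :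
    FactorBounded (fun l => l * α + e l) (joinWithZeros w m n) ∧
      SuffixBounded (fun l => l * α + e (w n).length) (joinWithZeros w m n) := by
  induction n with
  | zero => exact ⟨hw 0 le_rfl, (hw 0 le_rfl).suffixBounded_length he⟩
  | succ n ih =>
    obtain ⟨hF, hS⟩ := ih (fun i hi => hw i (by omega)) (fun i hi => hm i (by omega))
    have hL := hS.append_replicate_zero hα (hm n (by omega))
    exact ⟨(hF.append_replicate_zero (monotone_mul_add hα he) _).append_of_suffixBounded he hL
      (hw _ le_rfl), hL.append_of_factorBounded he (hw _ le_rfl)⟩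

/-- Bounded density shifts with `h n = n·α + e n` (`e` increasing) have non-uniform
specification with gap bounds `2·e(n)/α`: words of the language separated by blocks of `0`s of
length at least `max (2 e(nᵢ)/α) (2 e(nᵢ₊₁)/α)` concatenate to a word of the language. -/
theorem bdshift_nonUnifSpec (k : ℕ) (h : ℕ → ℝ) (α : ℝ) (hα : 0 < α)
    (e : ℕ → ℕ) (he : Monotone e) (hh : ∀ n : ℕ, h n = n * α + e n)
    (j : ℕ) (w : ℕ → List ℕ) (hw : ∀ i < j, InBDLang k h (w i))
    (m : ℕ → ℕ)
    (hm : ∀ i, i + 1 < j →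
      max (2 * (e (w i).length : ℝ) / α) (2 * (e (w (i + 1)).length : ℝ) / α) ≤ (m i : ℝ)) :
    InBDLang k h
      (((List.range j).map
        (fun i => w i ++ List.replicate (if i + 1 < j then m i else 0) 0)).flatten) := by
  obtain rfl : h = fun n => n * α + e n := funext hh
  have he' : Monotone fun n => (e n : ℝ) := Nat.mono_cast.comp he
  have hmono := monotone_mul_add hα.le he'
  rcases j with _ | n
  · refine inBDLang_of_factorBounded hmono (by simp) fun u hu => ?_
    simp [List.eq_nil_of_infix_nil (by simpa using hu)]
  have hwords i (hi : i ≤ n) := (hw i (by omega)).le_and_factorBounded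
  have hgap : ∀ i < n, (e (w i).length : ℝ) ≤ m i * α := fun i hi => by
    have h2 := (le_max_left _ _).trans (hm i (by omega))
    rw [div_le_iff₀ hα] at h2
    linarith [(e (w i).length).cast_nonneg (α := ℝ)]
  rw [flatten_map_range_eq_joinWithZeros, inBDLang_iff hmono]
  exact ⟨joinWithZeros_le fun i hi => (hwords i hi).1,
    (joinWithZeros_bounded hα.le he' n (fun i hi => (hwords i hi).2) hgap).1⟩
end

section
/- Let S be a Sturmian subshift, {n_k} integers with n_k ≥ 2n_{k−1} + 2k for all k, and X = X_{S,{n_k}} the associated subshift. Then X contains no periodic points. -/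
open Filter Topology MeasureTheory

/-- The left shift on `ℤ → Bool`. -/
def shiftB (x : ℤ → Bool) : ℤ → Bool := fun i => x (i + 1)

/-- A subshift over `{0,1}`: a closed shift-invariant subset of `{0,1}^ℤ`. -/
def IsSubshiftB (S : Set (ℤ → Bool)) : Prop :=
  IsClosed S ∧ ∀ x : ℤ → Bool, x ∈ S ↔ shiftB x ∈ S

/-- A Sturmian subshift: a nonempty minimal subshift with word complexity `n + 1`. -/
def IsSturmian (S : Set (ℤ → Bool)) : Prop :=
  IsSubshiftB S ∧ S.Nonempty ∧
    (∀ x ∈ S, S ⊆ closure {y | ∃ t : ℤ, y = fun i => x (i + t)}) ∧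
    ∀ n : ℕ, 1 ≤ n →
      Set.ncard {w : Fin n → Bool |
        ∃ x ∈ S, ∃ i : ℤ, ∀ l : Fin n, x (i + (l : ℕ)) = w l} = n + 1

/-- The subshift `X_{S,{n_k}}`: points `x` such that every window of length `n_k + 2k`
contains a `k`-letter word of the language of `S`. -/
def XS (S : Set (ℤ → Bool)) (nseq : ℕ → ℕ) : Set (ℤ → Bool) :=
  {x | ∀ (i : ℤ) (k : ℕ), 1 ≤ k → ∃ j : ℤ, i ≤ j ∧ j + k ≤ i + nseq k + 2 * k ∧
    ∃ s ∈ S, ∃ t : ℤ, ∀ l < k, x (j + l) = s (t + l)}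

/-!
If `x ∈ X` has period `p`, the `S`-words that `x` contains are `p`-periodic, so `S` holds points
that are `p`-periodic on arbitrarily long windows, and by compactness a `p`-periodic point `y`.
By minimality `S` is then the orbit of `y`, which has at most `p` points; hence `S` has at most
`p` words of length `p`, against the complexity `p + 1`.
-/

open Function Set

theorem IsSubshiftB.shift_mem_iff {S : Set (ℤ → Bool)} (hS : IsSubshiftB S) (s : ℤ → Bool)
    (t : ℤ) : (fun i => s (i + t)) ∈ S ↔ s ∈ S := by
  induction t using Int.induction_on with
  | zero => simp
  | succ n ih =>
    rw [← ih, hS.2 (fun i => s (i + n))]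
    exact iff_of_eq (congrArg (· ∈ S) (funext fun i => congrArg s (by ring)))
  | pred n ih =>
    rw [← ih, hS.2 (fun i => s (i + (-n - 1)))]
    exact iff_of_eq (congrArg (· ∈ S) (funext fun i => congrArg s (by ring)))

theorem exists_periodic_of_forall_exists_periodicOn {α : Type*} [TopologicalSpace α] [T2Space α]
    {S : Set (ℤ → α)} (hS : IsCompact S) {p : ℤ}
    (h : ∀ m : ℕ, ∃ z ∈ S, ∀ l : ℤ, l.natAbs ≤ m → z (l + p) = z l) :
    ∃ y ∈ S, Periodic y p := by
  set A : ℕ → Set (ℤ → α) := fun m => S ∩ {z | ∀ l : ℤ, l.natAbs ≤ m → z (l + p) = z l}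
  have hA_closed : ∀ m, IsClosed (A m) := fun m => hS.isClosed.inter <| by
    simp only [ofPred_forall]
    exact isClosed_iInter fun l => isClosed_iInter fun _ =>
      isClosed_eq (continuous_apply _) (continuous_apply _)
  have hA_anti : ∀ m, A (m + 1) ⊆ A m := fun m z hz => ⟨hz.1, fun l hl => hz.2 l (by omega)⟩
  obtain ⟨y, hy⟩ := IsCompact.nonempty_iInter_of_sequence_nonempty_isCompact_isClosed A hA_anti
    h (hS.of_isClosed_subset (hA_closed 0) inter_subset_left) hA_closed
  rw [mem_iInter] at hy
  exact ⟨y, (hy 0).1, fun l => (hy l.natAbs).2 l le_rfl⟩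

theorem exists_periodicOn_of_mem_XS {S : Set (ℤ → Bool)} (hS : IsSubshiftB S) {nseq : ℕ → ℕ}
    {x : ℤ → Bool} (hx : x ∈ XS S nseq) {p : ℕ} (hper : Periodic x p) (m : ℕ) :
    ∃ z ∈ S, ∀ l : ℤ, l.natAbs ≤ m → z (l + p) = z l := by
  obtain ⟨j, -, -, s, hs, t, hst⟩ := hx 0 (2 * m + p + 1) (by omega)
  have hst' : ∀ a : ℤ, 0 ≤ a → a < 2 * m + p + 1 → s (t + a) = x (j + a) := fun a ha₀ ha => by
    lift a to ℕ using ha₀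
    exact (hst a (by omega)).symm
  -- `s` shifted so that the window `[-m, m + p]` of `z` is read off `x` from position `j`
  refine ⟨fun i => s (i + (t + m)), (hS.shift_mem_iff s _).2 hs, fun l hl => ?_⟩
  calc s (l + p + (t + m)) = s (t + (m + l + p)) := by ring_nf
    _ = x (j + (m + l) + p) := by rw [hst' _ (by omega) (by omega), add_assoc j]
    _ = s (l + (t + m)) := by
      rw [hper, ← hst' _ (by omega) (by omega)]
      ring_nf

theorem IsSturmian.not_periodic {S : Set (ℤ → Bool)} (hS : IsSturmian S) {y : ℤ → Bool}
    (hy : y ∈ S) {p : ℕ} (hp : 0 < p) (hper : Periodic y p) : False := by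
  obtain ⟨-, -, hmin, hcompl⟩ := hS
  set g : ℤ → ℤ → Bool := fun t i => y (i + t)
  have hg : Periodic g p := fun t => funext fun i => by
    simpa only [g, add_assoc] using hper (i + t)
  have hS_orbit : S ⊆ g '' Ico 0 p := by
    refine (hmin y hy).trans (closure_minimal ?_ ((finite_Ico _ _).image g).isClosed)
    rintro _ ⟨t, rfl⟩
    obtain ⟨r, hr, e⟩ := hg.exists_mem_Ico₀ (by omega) t
    exact ⟨r, hr, e.symm⟩
  have hwords : {w : Fin p → Bool | ∃ x ∈ S, ∃ i : ℤ, ∀ l : Fin p, x (i + (l : ℕ)) = w l} ⊆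
      (fun r (l : Fin p) => g r l) '' Ico 0 p := by
    rintro w ⟨_, hx, i, hw⟩
    obtain ⟨t, -, rfl⟩ := hS_orbit hx
    obtain ⟨r, hr, e⟩ := hg.exists_mem_Ico₀ (by omega) (i + t)
    refine ⟨r, hr, funext fun l => ?_⟩
    dsimp only
    rw [← hw l, ← e]
    exact congrArg y (by ring)
  have := (ncard_le_ncard hwords ((finite_Ico _ _).image _)).trans
    (ncard_image_le (finite_Ico _ _))
  rw [hcompl p hp, ncard_eq_toFinset_card', toFinset_Ico, Int.card_Ico] at this
  omega

theorem XS_no_periodic_points_general (S : Set (ℤ → Bool)) (hS : IsSturmian S)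
    (nseq : ℕ → ℕ)
    (x : ℤ → Bool) (hx : x ∈ XS S nseq) (p : ℕ) (hp : 0 < p) :
    ∃ i : ℤ, x (i + p) ≠ x i := by
  by_contra! hper
  obtain ⟨y, hy, hy_per⟩ := exists_periodic_of_forall_exists_periodicOn hS.1.1.isCompact
    (exists_periodicOn_of_mem_XS hS.1 hx hper)
  exact hS.not_periodic hy hp hy_per

/-- If `S` is Sturmian and `n_k ≥ 2 n_{k-1} + 2k`, then `X_{S,{n_k}}` has no periodic points. -/
theorem XS_no_periodic_points (S : Set (ℤ → Bool)) (hS : IsSturmian S)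
    (nseq : ℕ → ℕ) (hn : ∀ k : ℕ, 1 ≤ k → 2 * nseq (k - 1) + 2 * k ≤ nseq k)
    (x : ℤ → Bool) (hx : x ∈ XS S nseq) (p : ℕ) (hp : 0 < p) :
    ∃ i : ℤ, x (i + p) ≠ x i :=
  XS_no_periodic_points_general S hS nseq x hx p hp
end

section
/- For the full shift (X,T) on {0,1} and increasing h : ℕ → ℝ⁺ with lim h(n)/n = ∞, the potential φ_h(x) := 1/h(k), where k is maximal with x(−k) = ⋯ = x(k) (and φ_h(x) = 0 if x is constant), satisfies Var(X,T,φ_h,n,δ) = 1/h(n) for all n, where δ is an expansivity constant with d(x,y) ≤ δ ⟹ x(0) = y(0). In particular n·Var(X,T,φ_h,n,δ) → 0. -/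
open Filter Topology MeasureTheory

/-- Two-sided variation of `φ` on the full `{0,1}`-shift: the sup of `|φ x − φ y|` over pairs
agreeing on coordinates `−n, …, n` (which is the meaning of `d(Tⁱx,Tⁱy) < δ` for `|i| ≤ n`
at the expansivity scale `δ`). -/
noncomputable def fullShiftVar (φ : (ℤ → Bool) → ℝ) (n : ℕ) : ℝ :=
  sSup {r | ∃ x y : ℤ → Bool, (∀ i : ℤ, |i| ≤ (n : ℤ) → x i = y i) ∧ r = |φ x - φ y|}

/-- If `x` is not constant, there is a maximal `k` with `x` constant on `[-k,k]`. -/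
lemma exists_max_k (x : ℤ → Bool) (hx : ∃ j : ℤ, x j ≠ x 0) :
    ∃ k : ℕ, (∀ i : ℤ, |i| ≤ (k : ℤ) → x i = x 0) ∧
      ¬(∀ i : ℤ, |i| ≤ (k : ℤ) + 1 → x i = x 0) := by
  classical
  obtain ⟨j, hj⟩ := hx
  have hP : ∃ m : ℕ, ∃ i : ℤ, |i| ≤ (m : ℤ) ∧ x i ≠ x 0 :=
    ⟨j.natAbs, j, (Int.abs_eq_natAbs j).le, hj⟩
  have hmspec := Nat.find_spec hP
  have hm0 : Nat.find hP ≠ 0 := by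
    intro h0
    obtain ⟨i, hi, hne⟩ := hmspec
    rw [h0] at hi
    norm_num [abs_nonpos_iff] at hi
    exact hne (by rw [hi])
  obtain ⟨k, hk⟩ := Nat.exists_eq_succ_of_ne_zero hm0
  refine ⟨k, ?_, ?_⟩
  · intro i hi
    by_contra hne
    have : k < Nat.find hP := by omega
    exact Nat.find_min hP this ⟨i, hi, hne⟩
  · intro hall
    obtain ⟨i, hi, hne⟩ := hmspec
    refine hne (hall i ?_)
    rw [hk] at hi
    push_cast at hi ⊢
    linarith

/-- For the potential `φ_h(x) = 1/h(k)` (`k` maximal with `x(−k) = ⋯ = x(k)`; `φ_h = 0` on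
constant sequences) with `h` increasing and `h n / n → ∞`:
`Var(X,T,φ_h,n,δ) = 1/h(n)` and `n · Var(X,T,φ_h,n,δ) → 0`. -/
theorem fullShiftVar_potential (h : ℕ → ℝ) (hpos : ∀ n, 0 < h n) (hmono : StrictMono h)
    (hgrow : Filter.Tendsto (fun n : ℕ => h n / n) Filter.atTop Filter.atTop)
    (φ : (ℤ → Bool) → ℝ)
    (hφmax : ∀ (x : ℤ → Bool) (k : ℕ), (∀ i : ℤ, |i| ≤ (k : ℤ) → x i = x 0) →
      ¬(∀ i : ℤ, |i| ≤ (k : ℤ) + 1 → x i = x 0) → φ x = 1 / h k)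
    (hφconst : ∀ x : ℤ → Bool, (∀ i : ℤ, x i = x 0) → φ x = 0) :
    (∀ n : ℕ, fullShiftVar φ n = 1 / h n) ∧
      Filter.Tendsto (fun n : ℕ => (n : ℝ) * fullShiftVar φ n) Filter.atTop (nhds 0) := by
  classical
  -- bound on φ for sequences constant on [-n,n]
  have hbound : ∀ (n : ℕ) (x : ℤ → Bool), (∀ i : ℤ, |i| ≤ (n : ℤ) → x i = x 0) →
      0 ≤ φ x ∧ φ x ≤ 1 / h n := by
    intro n x hx
    by_cases hc : ∀ i : ℤ, x i = x 0
    · rw [hφconst x hc]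
      exact ⟨le_refl 0, (one_div_pos.mpr (hpos n)).le⟩
    · push_neg at hc
      obtain ⟨k, hk1, hk2⟩ := exists_max_k x hc
      rw [hφmax x k hk1 hk2]
      have hnk : n ≤ k := by
        by_contra hlt
        push_neg at hlt
        apply hk2
        intro i hi
        apply hx
        have : (k : ℤ) + 1 ≤ (n : ℤ) := by exact_mod_cast hlt
        linarith
      constructor
      · exact (one_div_pos.mpr (hpos k)).le
      · exact one_div_le_one_div_of_le (hpos n) (hmono.monotone hnk)
  have hvar : ∀ n : ℕ, fullShiftVar φ n = 1 / h n := by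
    intro n
    set S : Set ℝ :=
      {r | ∃ x y : ℤ → Bool, (∀ i : ℤ, |i| ≤ (n : ℤ) → x i = y i) ∧ r = |φ x - φ y|} with hS
    -- upper bound
    have hub : ∀ r ∈ S, r ≤ 1 / h n := by
      rintro r ⟨x, y, hxy, rfl⟩
      by_cases hc : ∃ i : ℤ, |i| ≤ (n : ℤ) ∧ x i ≠ x 0
      · -- x not constant on [-n,n]: φ x = φ y
        have hxne : ∃ j : ℤ, x j ≠ x 0 := by
          obtain ⟨i, _, hi⟩ := hc; exact ⟨i, hi⟩
        obtain ⟨k, hk1, hk2⟩ := exists_max_k x hxne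
        obtain ⟨i0, hi0n, hi0ne⟩ := hc
        have hki0 : (k : ℤ) < |i0| := by
          by_contra hle
          push_neg at hle
          exact hi0ne (hk1 i0 hle)
        have hkn : (k : ℤ) + 1 ≤ (n : ℤ) := by linarith
        have hy0 : y 0 = x 0 := (hxy 0 (by simp)).symm
        have hyk1 : ∀ i : ℤ, |i| ≤ (k : ℤ) → y i = y 0 := by
          intro i hi
          rw [hy0, ← hxy i (by linarith)]
          exact hk1 i hi
        have hyk2 : ¬(∀ i : ℤ, |i| ≤ (k : ℤ) + 1 → y i = y 0) := by
          intro hall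
          apply hk2
          intro i hi
          rw [hxy i (by linarith), ← hy0]
          exact hall i hi
        rw [hφmax x k hk1 hk2, hφmax y k hyk1 hyk2]
        simp
        exact (hpos n).le
      · -- x constant on [-n,n], hence so is y; both φ's in [0, 1/h n]
        push_neg at hc
        have hy0 : y 0 = x 0 := (hxy 0 (by simp)).symm
        have hyc : ∀ i : ℤ, |i| ≤ (n : ℤ) → y i = y 0 := by
          intro i hi
          rw [hy0, ← hxy i hi]
          exact hc i hi
        obtain ⟨hx1, hx2⟩ := hbound n x hc
        obtain ⟨hy1, hy2⟩ := hbound n y hyc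
        rw [abs_sub_le_iff]
        constructor <;> linarith
    -- membership of 1 / h n
    have hmem : (1 : ℝ) / h n ∈ S := by
      refine ⟨fun _ => false, fun i => if i = (n : ℤ) + 1 then true else false, ?_, ?_⟩
      · intro i hi
        have : i ≠ (n : ℤ) + 1 := by
          intro hi'
          rw [hi'] at hi
          rw [abs_of_nonneg (by positivity)] at hi
          linarith
        simp [this]
      · have h1 : φ (fun _ => false) = 0 := hφconst _ (fun _ => rfl)
        have h2 : φ (fun i => if i = (n : ℤ) + 1 then true else false) = 1 / h n := by
          apply hφmax
          · intro i hi
            have h0 : (0 : ℤ) ≠ (n : ℤ) + 1 := by omega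
            have : i ≠ (n : ℤ) + 1 := by
              intro hi'
              rw [hi'] at hi
              rw [abs_of_nonneg (by positivity)] at hi
              linarith
            simp [this, h0]
          · intro hall
            have := hall ((n : ℤ) + 1) (by rw [abs_of_nonneg (by positivity)])
            have h0 : (0 : ℤ) ≠ (n : ℤ) + 1 := by omega
            simp [h0] at this
        rw [h1, h2, zero_sub, abs_neg, abs_of_nonneg (one_div_pos.mpr (hpos n)).le]
    rw [fullShiftVar, ← hS]
    exact le_antisymm (csSup_le ⟨_, hmem⟩ hub) (le_csSup ⟨_, hub⟩ hmem)
  refine ⟨hvar, ?_⟩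
  have htend := hgrow.inv_tendsto_atTop
  refine htend.congr fun n => ?_
  rw [hvar n, Pi.inv_apply, inv_div, div_eq_mul_one_div]
end

section
/- For the full shift on {0,1}, increasing h : ℕ → ℝ⁺, and the potential φ_h as above: if Σ 1/h(n) diverges, then φ_h does not have the Bowen property, i.e., sup_n V(X,T,φ_h,n,δ) = ∞, where V is the partial sum variation at scale δ. -/
open Filter Topology MeasureTheory

lemma shiftB_iter (z : ℤ → Bool) (n : ℕ) (j : ℤ) :
    (shiftB^[n] z) j = z (j + n) := by
  induction n generalizing z with
  | zero => simp
  | succ k ih =>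
    rw [Function.iterate_succ_apply, ih]
    simp only [shiftB]
    congr 1
    push_cast
    ring

/-- If `∑ 1/h(n)` diverges, the potential `φ_h` does not have the Bowen property: its partial
sum variations at the expansivity scale `δ` are unbounded. Here `d` is a metric on the full
shift with `d x y ≤ δ → x 0 = y 0` and `x 0 = y 0 → d x y < δ`. -/
theorem potential_not_Bowen (h : ℕ → ℝ) (hpos : ∀ n, 0 < h n) (hmono : StrictMono h)
    (hdiv : ¬ Summable (fun n : ℕ => 1 / h (n + 1)))
    (φ : (ℤ → Bool) → ℝ)
    (hφmax : ∀ (x : ℤ → Bool) (k : ℕ), (∀ i : ℤ, |i| ≤ (k : ℤ) → x i = x 0) →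
      ¬(∀ i : ℤ, |i| ≤ (k : ℤ) + 1 → x i = x 0) → φ x = 1 / h k)
    (hφconst : ∀ x : ℤ → Bool, (∀ i : ℤ, x i = x 0) → φ x = 0)
    (d : (ℤ → Bool) → (ℤ → Bool) → ℝ) (δ : ℝ) (hδ : 0 < δ)
    (hd1 : ∀ x y : ℤ → Bool, d x y ≤ δ → x 0 = y 0)
    (hd2 : ∀ x y : ℤ → Bool, x 0 = y 0 → d x y < δ) :
    ∀ B : ℝ, ∃ (n : ℕ) (x y : ℤ → Bool),
      (∀ i < n, d (shiftB^[i] x) (shiftB^[i] y) < δ) ∧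
      B < |(∑ i ∈ Finset.range n, φ (shiftB^[i] x)) -
            ∑ i ∈ Finset.range n, φ (shiftB^[i] y)| := by
  intro B
  have hnn : ∀ n : ℕ, 0 ≤ 1 / h (n + 1) := fun n => le_of_lt (div_pos one_pos (hpos _))
  have htend := (not_summable_iff_tendsto_nat_atTop_of_nonneg hnn).mp hdiv
  obtain ⟨n, hn⟩ := (htend.eventually (eventually_gt_atTop B)).exists
  set x : ℤ → Bool := fun _ => false with hx
  set y : ℤ → Bool := fun i => decide (i < 0) with hy
  refine ⟨n + 1, x, y, ?_, ?_⟩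
  · intro i hi
    apply hd2
    rw [shiftB_iter, shiftB_iter]
    simp [hx, hy]
  · have hφx : ∀ i : ℕ, φ (shiftB^[i] x) = 0 := by
      intro i
      apply hφconst
      intro j
      rw [shiftB_iter, shiftB_iter]
    have hφy : ∀ i : ℕ, φ (shiftB^[i] y) = 1 / h i := by
      intro i
      apply hφmax _ i
      · intro j hj
        rw [abs_le] at hj
        rw [shiftB_iter, shiftB_iter]
        simp only [hy]
        rw [decide_eq_decide]
        omega
      · intro hcon
        have h1 := hcon (-(i + 1)) (by rw [abs_le]; omega)
        rw [shiftB_iter, shiftB_iter] at h1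
        simp only [hy] at h1
        rw [decide_eq_decide] at h1
        omega
    have hsx : (∑ i ∈ Finset.range (n + 1), φ (shiftB^[i] x)) = 0 := by
      simp [hφx]
    have hsy : (∑ i ∈ Finset.range (n + 1), φ (shiftB^[i] y))
        = 1 / h 0 + ∑ i ∈ Finset.range n, 1 / h (i + 1) := by
      rw [Finset.sum_congr rfl (fun i _ => hφy i), Finset.sum_range_succ']
      ring
    have h0 : 0 < 1 / h 0 := div_pos one_pos (hpos _)
    have hS : 0 ≤ ∑ i ∈ Finset.range n, 1 / h (i + 1) :=
      Finset.sum_nonneg fun i _ => hnn i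
    rw [hsx, hsy, zero_sub, abs_neg, abs_of_pos (by linarith)]
    linarith
end
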